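/- (Per-step Rényi-DP bound for general updates, Theorem 3) Let M(X) be the distribution obtained by sampling a minibatch X_B from X (finitely many minibatches with probabilities P(X_B)) and outputting N(U(X_B), σ²I_d). For integer α > 1 and arbitrary datasets X, X': D_α(M(X')‖M(X)) ≤ (1/(α−1))·E_{X_B∼X}[ ln( E_{(X'_B)^α ∼ X'^α}[ exp(−Δ_{U,α}((X'_B)^α, X_B)/(2σ²)) ] ) ], where Δ_{U,α}((X'_B)^{~α}, X_B) = Σ_i ‖U(X'_B{}^i)‖² − (α−1)‖U(X_B)‖² − ‖(Σ_i U(X'_B{}^i)) − (α−1)U(X_B)‖². -/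

import Mathlib

open Real MeasureTheory
open scoped RealInnerProductSpace ENNReal

variable (d : ℕ)

/-- The `d`-dimensional isotropic Gaussian density `N(m, σ²I_d)`. -/
noncomputable def gaussPdf (σ : ℝ) (m x : EuclideanSpace ℝ (Fin d)) : ℝ :=
  (1 / (σ * Real.sqrt (2 * π)) ^ d) * Real.exp (-‖x - m‖ ^ 2 / (2 * σ ^ 2))

section aux


variable {d : ℕ} {σ : ℝ}

local notation "E" => EuclideanSpace ℝ (Fin d)

lemma gaussPdf_pos (hσ : 0 < σ) (m x : E) : 0 < gaussPdf d σ m x := by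
  unfold gaussPdf
  have h : 0 < σ * Real.sqrt (2 * π) := by positivity
  positivity

lemma gaussPdf_continuous (m : E) : Continuous (gaussPdf d σ m) := by
  unfold gaussPdf
  fun_prop

lemma gaussPdf_eq (m x : E) :
    gaussPdf d σ m x
      = (1 / (σ * Real.sqrt (2 * π)) ^ d) * rexp (-(1 / (2 * σ ^ 2)) * ‖x - m‖ ^ 2) := by
  rw [gaussPdf]; congr 1; ring_nf

lemma integrable_rexp_gauss (hσ : 0 < σ) :
    Integrable (fun v : E => rexp (-(1 / (2 * σ ^ 2)) * ‖v‖ ^ 2)) := by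
  have hb : (0:ℝ) < 1 / (2 * σ ^ 2) := by positivity
  have h := (GaussianFourier.integrable_cexp_neg_mul_sq_norm_add
      (V := E) (b := ((1 / (2 * σ ^ 2) : ℝ) : ℂ))
      (by rw [Complex.ofReal_re]; exact hb) 0 0).norm
  refine h.congr (ae_of_all _ fun v => ?_)
  simp only [Complex.norm_exp, ← Complex.ofReal_pow,
    ← Complex.ofReal_mul, ← Complex.ofReal_neg, Complex.ofReal_re, zero_mul, add_zero, neg_mul]

lemma integrable_gaussPdf (hσ : 0 < σ) (m : E) : Integrable (gaussPdf d σ m) := by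
  have h := ((integrable_rexp_gauss (d := d) hσ).comp_sub_right m).const_mul
    (1 / (σ * Real.sqrt (2 * π)) ^ d)
  refine h.congr (ae_of_all _ fun x => ?_)
  rw [gaussPdf_eq]

lemma integral_gaussPdf (hσ : 0 < σ) (m : E) : ∫ x : E, gaussPdf d σ m x = 1 := by
  have hb : (0:ℝ) < 1 / (2 * σ ^ 2) := by positivity
  have h1 : ∫ x : E, gaussPdf d σ m x
      = ∫ x : E, (1 / (σ * Real.sqrt (2 * π)) ^ d) * rexp (-(1 / (2 * σ ^ 2)) * ‖x‖ ^ 2) := by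
    rw [← integral_sub_right_eq_self (μ := volume)
      (fun x : E => (1 / (σ * Real.sqrt (2 * π)) ^ d) * rexp (-(1 / (2 * σ ^ 2)) * ‖x‖ ^ 2)) m]
    exact integral_congr_ae (ae_of_all _ fun x => by simpa using gaussPdf_eq m x)
  rw [h1, integral_const_mul, GaussianFourier.integral_rexp_neg_mul_sq_norm hb]
  have hd : (Module.finrank ℝ E) = d := finrank_euclideanSpace_fin
  rw [hd]
  have h2 : π / (1 / (2 * σ ^ 2)) = (σ * Real.sqrt (2 * π)) ^ 2 := by
    rw [mul_pow, sq_sqrt (by positivity)]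
    field_simp
  have hx : (0:ℝ) < σ * Real.sqrt (2 * π) := by positivity
  rw [h2, ← Real.rpow_natCast (σ * Real.sqrt (2 * π)) 2, ← Real.rpow_mul hx.le]
  have he : ((2:ℕ):ℝ) * ((d:ℝ) / 2) = (d:ℝ) := by push_cast; ring
  rw [he, Real.rpow_natCast]
  field_simp



lemma norm_expand {α : ℕ} (m : Fin α → E) (m0 x : E) :
    (∑ i, ‖x - m i‖ ^ 2) + (1 - (α:ℝ)) * ‖x - m0‖ ^ 2
      = ‖x - ((∑ i, m i) - ((α:ℝ) - 1) • m0)‖ ^ 2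
        + ((∑ i, ‖m i‖ ^ 2) - ((α:ℝ) - 1) * ‖m0‖ ^ 2
          - ‖(∑ i, m i) - ((α:ℝ) - 1) • m0‖ ^ 2) := by
  have expand : ∀ y : E, ‖x - y‖ ^ 2 = ‖x‖ ^ 2 - 2 * (inner ℝ x y : ℝ) + ‖y‖ ^ 2 :=
    fun y => norm_sub_sq_real x y
  simp only [expand, inner_sub_right, inner_sum, real_inner_smul_right,
    Finset.sum_add_distrib, Finset.sum_sub_distrib, Finset.sum_const,
    Finset.card_univ, Fintype.card_fin, nsmul_eq_mul, Finset.mul_sum]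
  rw [← Finset.mul_sum]
  ring

lemma gauss_prod_eq (hσ : 0 < σ) {α : ℕ} (m : Fin α → E) (m0 x : E) :
    (∏ i, gaussPdf d σ (m i) x) * gaussPdf d σ m0 x ^ (1 - (α:ℝ))
      = Real.exp (-((∑ i, ‖m i‖ ^ 2) - ((α:ℝ) - 1) * ‖m0‖ ^ 2
            - ‖(∑ i, m i) - ((α:ℝ) - 1) • m0‖ ^ 2) / (2 * σ ^ 2))
        * gaussPdf d σ ((∑ i, m i) - ((α:ℝ) - 1) • m0) x := by
  set C : ℝ := 1 / (σ * Real.sqrt (2 * π)) ^ d with hCdef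
  have hC : 0 < C := by
    have h : 0 < σ * Real.sqrt (2 * π) := by positivity
    positivity
  set c : ℝ := 2 * σ ^ 2 with hcdef
  have hc : 0 < c := by positivity
  set v : E := (∑ i, m i) - ((α:ℝ) - 1) • m0 with hvdef
  have h1 : ∏ i, gaussPdf d σ (m i) x = C ^ α * Real.exp (-(∑ i, ‖x - m i‖ ^ 2) / c) := by
    simp only [gaussPdf, ← hCdef, ← hcdef, Finset.prod_mul_distrib, Finset.prod_const,
      Finset.card_univ, Fintype.card_fin, ← Real.exp_sum]
    congr 1
    rw [← Finset.sum_div, ← Finset.sum_neg_distrib]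
  have h2 : gaussPdf d σ m0 x ^ (1 - (α:ℝ))
      = C ^ (1 - (α:ℝ)) * Real.exp (-‖x - m0‖ ^ 2 / c * (1 - (α:ℝ))) := by
    rw [gaussPdf, ← hCdef, ← hcdef, Real.mul_rpow hC.le (Real.exp_nonneg _), ← Real.exp_mul]
  rw [h1, h2]
  have hCC : C ^ α * C ^ (1 - (α:ℝ)) = C := by
    rw [← Real.rpow_natCast C α, ← Real.rpow_add hC]
    norm_num
  have hexp : (-(∑ i, ‖x - m i‖ ^ 2) / c) + (-‖x - m0‖ ^ 2 / c * (1 - (α:ℝ)))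
      = (-((∑ i, ‖m i‖ ^ 2) - ((α:ℝ) - 1) * ‖m0‖ ^ 2 - ‖v‖ ^ 2) / c) + (-‖x - v‖ ^ 2 / c) := by
    have key := norm_expand m m0 x
    rw [← hvdef] at key
    rw [div_mul_eq_mul_div, ← add_div, ← add_div]
    congr 1
    linarith [key]
  calc C ^ α * Real.exp (-(∑ i, ‖x - m i‖ ^ 2) / c)
        * (C ^ (1 - (α:ℝ)) * Real.exp (-‖x - m0‖ ^ 2 / c * (1 - (α:ℝ))))
      = (C ^ α * C ^ (1 - (α:ℝ)))
        * Real.exp ((-(∑ i, ‖x - m i‖ ^ 2) / c) + (-‖x - m0‖ ^ 2 / c * (1 - (α:ℝ)))) := by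
        rw [Real.exp_add]; ring
    _ = Real.exp (-((∑ i, ‖m i‖ ^ 2) - ((α:ℝ) - 1) * ‖m0‖ ^ 2 - ‖v‖ ^ 2) / c)
        * (C * Real.exp (-‖x - v‖ ^ 2 / c)) := by
        rw [hCC, hexp, Real.exp_add]; ring
    _ = _ := by rw [gaussPdf, ← hCdef, ← hcdef]

lemma lintegral_gaussPdf (hσ : 0 < σ) (m : E) :
    ∫⁻ x : E, ENNReal.ofReal (gaussPdf d σ m x) = 1 := by
  rw [← ofReal_integral_eq_lintegral_ofReal (integrable_gaussPdf hσ m)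
    (ae_of_all _ fun x => (gaussPdf_pos hσ m x).le), integral_gaussPdf hσ m, ENNReal.ofReal_one]

end aux

/-- Per-step Rényi-DP bound for general updates (Theorem 3): the Rényi divergence of the
sampled Gaussian mechanism on `X'` versus `X` is bounded via the sensitivity distribution
`Δ_{U,α}`, comparing `α`-tuples of minibatches from `X'` to minibatches from `X`. -/
theorem stmt_10 (σ : ℝ) (hσ : 0 < σ) (α : ℕ) (hα : 1 < α)
    {ι ι' : Type*} [Fintype ι] [Fintype ι']
    (P : ι → ℝ) (P' : ι' → ℝ)
    (hP : ∀ j, 0 ≤ P j) (hP' : ∀ j, 0 ≤ P' j)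
    (hPsum : ∑ j, P j = 1) (hP'sum : ∑ j, P' j = 1)
    (U : ι → EuclideanSpace ℝ (Fin d)) (U' : ι' → EuclideanSpace ℝ (Fin d)) :
    (1 / ((α : ℝ) - 1)) *
        Real.log (∫ x : EuclideanSpace ℝ (Fin d),
          (∑ j', P' j' * gaussPdf d σ (U' j') x) ^ (α : ℝ) *
            (∑ j, P j * gaussPdf d σ (U j) x) ^ (1 - (α : ℝ)))
      ≤ (1 / ((α : ℝ) - 1)) * ∑ j, P j *
          Real.log (∑ t : Fin α → ι', (∏ i, P' (t i)) *
            Real.exp (-((∑ i, ‖U' (t i)‖ ^ 2) - ((α : ℝ) - 1) * ‖U j‖ ^ 2 -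
              ‖(∑ i, U' (t i)) - ((α : ℝ) - 1) • U j‖ ^ 2) / (2 * σ ^ 2))) := by
  classical
  have hα1 : (1:ℝ) < (α:ℝ) := by exact_mod_cast hα
  have hαle : 1 - (α:ℝ) ≤ 0 := by linarith
  have hcoef : (0:ℝ) ≤ 1 / ((α:ℝ) - 1) := by
    have h : (0:ℝ) < (α:ℝ) - 1 := by linarith
    positivity
  obtain ⟨j₀, hj₀⟩ : ∃ j', 0 < P' j' := by
    by_contra h
    push_neg at h
    have h2 : ∑ j', P' j' ≤ 0 := Finset.sum_nonpos fun j _ => h j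
    rw [hP'sum] at h2; linarith
  obtain ⟨j₁, hj₁⟩ : ∃ j, 0 < P j := by
    by_contra h
    push_neg at h
    have h2 : ∑ j, P j ≤ 0 := Finset.sum_nonpos fun j _ => h j
    rw [hPsum] at h2; linarith
  have hgp : ∀ (m : EuclideanSpace ℝ (Fin d)) x, 0 < gaussPdf d σ m x := gaussPdf_pos hσ
  have hgc : ∀ m : EuclideanSpace ℝ (Fin d), Continuous (gaussPdf d σ m) := gaussPdf_continuous
  set c : ℝ := 2 * σ ^ 2 with hcdef
  set D : (Fin α → ι') → ι → ℝ := fun t j =>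
    (∑ i, ‖U' (t i)‖ ^ 2) - ((α:ℝ) - 1) * ‖U j‖ ^ 2
      - ‖(∑ i, U' (t i)) - ((α:ℝ) - 1) • U j‖ ^ 2 with hDdef
  set A : ι → ℝ := fun j =>
    ∑ t : Fin α → ι', (∏ i, P' (t i)) * rexp (-(D t j) / c) with hAdef
  set q : EuclideanSpace ℝ (Fin d) → ℝ :=
    fun x => ∑ j', P' j' * gaussPdf d σ (U' j') x with hqdef
  set pm : EuclideanSpace ℝ (Fin d) → ℝ :=
    fun x => ∑ j, P j * gaussPdf d σ (U j) x with hpmdef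
  have hq : ∀ x, 0 < q x := fun x =>
    lt_of_lt_of_le (mul_pos hj₀ (hgp _ x))
      (Finset.single_le_sum (f := fun j' => P' j' * gaussPdf d σ (U' j') x)
        (fun j _ => mul_nonneg (hP' j) (hgp _ x).le) (Finset.mem_univ j₀))
  have hpm : ∀ x, 0 < pm x := fun x =>
    lt_of_lt_of_le (mul_pos hj₁ (hgp _ x))
      (Finset.single_le_sum (f := fun j => P j * gaussPdf d σ (U j) x)
        (fun j _ => mul_nonneg (hP j) (hgp _ x).le) (Finset.mem_univ j₁))
  have hApos : ∀ j, 0 < A j := by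
    intro j
    refine lt_of_lt_of_le
      (show 0 < (∏ _i : Fin α, P' j₀) * rexp (-(D (fun _ => j₀) j) / c) from
        mul_pos (Finset.prod_pos fun _ _ => hj₀) (Real.exp_pos _)) ?_
    exact Finset.single_le_sum
      (f := fun t : Fin α → ι' => (∏ i, P' (t i)) * rexp (-(D t j) / c))
      (fun t _ => mul_nonneg (Finset.prod_nonneg fun i _ => hP' _) (Real.exp_pos _).le)
      (Finset.mem_univ fun _ => j₀)
  set f : ι → EuclideanSpace ℝ (Fin d) → ℝ :=
    fun j x => q x ^ (α:ℝ) * gaussPdf d σ (U j) x ^ (1 - (α:ℝ)) with hfdef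
  have hfpos : ∀ j x, 0 < f j x := fun j x =>
    mul_pos (Real.rpow_pos_of_pos (hq x) _) (Real.rpow_pos_of_pos (hgp _ x) _)
  have hqc : Continuous q := continuous_finset_sum _ fun j _ => continuous_const.mul (hgc _)
  have hpmc : Continuous pm := continuous_finset_sum _ fun j _ => continuous_const.mul (hgc _)
  have hfc : ∀ j, Continuous (f j) := fun j =>
    (hqc.rpow_const fun x => Or.inl (hq x).ne').mul
      ((hgc _).rpow_const fun x => Or.inl (hgp _ x).ne')
  have hfexp : ∀ j x, f j x = ∑ t : Fin α → ι',
      ((∏ i, P' (t i)) * rexp (-(D t j) / c)) *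
        gaussPdf d σ ((∑ i, U' (t i)) - ((α:ℝ) - 1) • U j) x := by
    intro j x
    have h0 : f j x = (∑ t : Fin α → ι', ∏ i, (P' (t i) * gaussPdf d σ (U' (t i)) x))
        * gaussPdf d σ (U j) x ^ (1 - (α:ℝ)) := by
      have hqα : q x ^ (α:ℝ)
          = ∑ t : Fin α → ι', ∏ i, (P' (t i) * gaussPdf d σ (U' (t i)) x) := by
        rw [Real.rpow_natCast, hqdef]
        rw [Finset.sum_pow' Finset.univ (fun j' => P' j' * gaussPdf d σ (U' j') x) α,
          Fintype.piFinset_univ]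
      rw [hfdef, ← hqα]
    rw [h0, Finset.sum_mul]
    refine Finset.sum_congr rfl fun t _ => ?_
    rw [Finset.prod_mul_distrib, mul_assoc,
      gauss_prod_eq hσ (fun i => U' (t i)) (U j) x]
    simp only [hDdef, hcdef]
    ring
  have hlg : ∀ m : EuclideanSpace ℝ (Fin d),
      ∫⁻ x, ENNReal.ofReal (gaussPdf d σ m x) = 1 := lintegral_gaussPdf hσ
  have hLf : ∀ j, ∫⁻ x, ENNReal.ofReal (f j x) = ENNReal.ofReal (A j) := by
    intro j
    have hterm : ∀ t : Fin α → ι', (0:ℝ) ≤ (∏ i, P' (t i)) * rexp (-(D t j) / c) :=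
      fun t => mul_nonneg (Finset.prod_nonneg fun i _ => hP' _) (Real.exp_pos _).le
    calc ∫⁻ x, ENNReal.ofReal (f j x)
        = ∫⁻ x, ∑ t : Fin α → ι', ENNReal.ofReal
            (((∏ i, P' (t i)) * rexp (-(D t j) / c)) *
              gaussPdf d σ ((∑ i, U' (t i)) - ((α:ℝ) - 1) • U j) x) := by
          refine lintegral_congr fun x => ?_
          rw [hfexp j x]
          exact ENNReal.ofReal_sum_of_nonneg fun t _ =>
            mul_nonneg (hterm t) (hgp _ _).le
      _ = ∑ t : Fin α → ι', ∫⁻ x, ENNReal.ofReal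
            (((∏ i, P' (t i)) * rexp (-(D t j) / c)) *
              gaussPdf d σ ((∑ i, U' (t i)) - ((α:ℝ) - 1) • U j) x) :=
          lintegral_finset_sum _ fun t _ =>
            (continuous_const.mul (hgc _)).measurable.ennreal_ofReal
      _ = ∑ t : Fin α → ι', ENNReal.ofReal ((∏ i, P' (t i)) * rexp (-(D t j) / c)) := by
          refine Finset.sum_congr rfl fun t _ => ?_
          simp_rw [ENNReal.ofReal_mul (hterm t)]
          rw [lintegral_const_mul _ ((hgc _).measurable.ennreal_ofReal), hlg, mul_one]
      _ = ENNReal.ofReal (A j) := by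
          rw [hAdef, ← ENNReal.ofReal_sum_of_nonneg fun t _ => hterm t]
  -- pointwise bound
  have hreal : ∀ x, q x ^ (α:ℝ) * pm x ^ (1 - (α:ℝ)) ≤ ∏ j, f j x ^ (P j) := by
    intro x
    have hgm : ∏ j, gaussPdf d σ (U j) x ^ (P j) ≤ pm x := by
      rw [hpmdef]
      exact Real.geom_mean_le_arith_mean_weighted Finset.univ P
        (fun j => gaussPdf d σ (U j) x) (fun j _ => hP j) hPsum
        (fun j _ => (hgp _ x).le)
    have hprodpos : 0 < ∏ j, gaussPdf d σ (U j) x ^ (P j) :=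
      Finset.prod_pos fun j _ => Real.rpow_pos_of_pos (hgp _ x) _
    have h1 : pm x ^ (1 - (α:ℝ)) ≤ (∏ j, gaussPdf d σ (U j) x ^ (P j)) ^ (1 - (α:ℝ)) :=
      Real.rpow_le_rpow_of_nonpos hprodpos hgm hαle
    have h2 : q x ^ (α:ℝ) * pm x ^ (1 - (α:ℝ))
        ≤ q x ^ (α:ℝ) * (∏ j, gaussPdf d σ (U j) x ^ (P j)) ^ (1 - (α:ℝ)) :=
      mul_le_mul_of_nonneg_left h1 (Real.rpow_nonneg (hq x).le _)
    refine h2.trans_eq ?_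
    have h3 : (∏ j, gaussPdf d σ (U j) x ^ (P j)) ^ (1 - (α:ℝ))
        = ∏ j, (gaussPdf d σ (U j) x ^ (1 - (α:ℝ))) ^ (P j) := by
      rw [← Real.finset_prod_rpow Finset.univ _
        (fun j _ => (Real.rpow_pos_of_pos (hgp _ x) _).le) (1 - (α:ℝ))]
      refine Finset.prod_congr rfl fun j _ => ?_
      rw [← Real.rpow_mul (hgp _ x).le, ← Real.rpow_mul (hgp _ x).le, mul_comm]
    have h4 : q x ^ (α:ℝ) = ∏ j, (q x ^ (α:ℝ)) ^ (P j) := by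
      rw [← Real.rpow_sum_of_pos (Real.rpow_pos_of_pos (hq x) _) P Finset.univ, hPsum,
        Real.rpow_one]
    rw [h3]
    conv_lhs => rw [h4]
    rw [← Finset.prod_mul_distrib]
    refine Finset.prod_congr rfl fun j _ => ?_
    rw [hfdef, Real.mul_rpow (Real.rpow_nonneg (hq x).le _)
      (Real.rpow_nonneg (hgp _ x).le _)]
  have hpoint : ∀ x, ENNReal.ofReal (q x ^ (α:ℝ) * pm x ^ (1 - (α:ℝ)))
      ≤ ∏ j, ENNReal.ofReal (f j x) ^ (P j) := by
    intro x
    refine (ENNReal.ofReal_le_ofReal (hreal x)).trans ?_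
    rw [ENNReal.ofReal_prod_of_nonneg fun j _ => (Real.rpow_nonneg (hfpos j x).le _)]
    exact le_of_eq (Finset.prod_congr rfl fun j _ =>
      (ENNReal.ofReal_rpow_of_pos (hfpos j x)).symm)
  -- Hölder
  set L : ℝ≥0∞ := ∫⁻ x : EuclideanSpace ℝ (Fin d),
    ENNReal.ofReal (q x ^ (α:ℝ) * pm x ^ (1 - (α:ℝ))) with hLdef
  set M : ℝ≥0∞ := ∏ j, ENNReal.ofReal (A j) ^ (P j) with hMdef
  have hLM : L ≤ M := by
    calc L ≤ ∫⁻ x, ∏ j, ENNReal.ofReal (f j x) ^ (P j) := lintegral_mono hpoint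
      _ ≤ ∏ j, (∫⁻ x, ENNReal.ofReal (f j x)) ^ (P j) :=
          ENNReal.lintegral_prod_norm_pow_le Finset.univ
            (fun j _ => ((hfc j).measurable.ennreal_ofReal).aemeasurable)
            hPsum (fun j _ => hP j)
      _ = M := by rw [hMdef]; exact Finset.prod_congr rfl fun j _ => by rw [hLf j]
  have hMne : M ≠ ⊤ := by
    rw [hMdef]
    refine (ENNReal.prod_lt_top fun j _ => ?_).ne
    exact ENNReal.rpow_lt_top_of_nonneg (hP j) ENNReal.ofReal_ne_top
  have hLne : L ≠ ⊤ := (lt_of_le_of_lt hLM hMne.lt_top).ne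
  have hLpos : 0 < L := by
    rw [hLdef, lintegral_pos_iff_support
      (show Measurable fun x => ENNReal.ofReal (q x ^ (α:ℝ) * pm x ^ (1 - (α:ℝ))) from
      ((hqc.rpow_const fun x => Or.inl (hq x).ne').mul
        (hpmc.rpow_const fun x => Or.inl (hpm x).ne')).measurable.ennreal_ofReal)]
    have hsupp : Function.support (fun x => ENNReal.ofReal
        (q x ^ (α:ℝ) * pm x ^ (1 - (α:ℝ)))) = Set.univ := by
      refine Set.eq_univ_of_forall fun x => ?_
      simp only [Function.mem_support, ne_eq, ENNReal.ofReal_eq_zero, not_le]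
      exact mul_pos (Real.rpow_pos_of_pos (hq x) _) (Real.rpow_pos_of_pos (hpm x) _)
    rw [hsupp]
    exact isOpen_univ.measure_pos volume Set.univ_nonempty
  -- convert to Bochner integral
  have hIeq : ∫ x : EuclideanSpace ℝ (Fin d), q x ^ (α:ℝ) * pm x ^ (1 - (α:ℝ))
      = L.toReal := by
    rw [hLdef, integral_eq_lintegral_of_nonneg_ae
      (ae_of_all _ fun x => mul_nonneg (Real.rpow_nonneg (hq x).le _)
        (Real.rpow_nonneg (hpm x).le _))
      ((hqc.rpow_const fun x => Or.inl (hq x).ne').mul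
        (hpmc.rpow_const fun x => Or.inl (hpm x).ne')).aestronglyMeasurable]
  have hMtoReal : M.toReal = ∏ j, A j ^ (P j) := by
    rw [hMdef, ENNReal.toReal_prod]
    exact Finset.prod_congr rfl fun j _ => by
      rw [← ENNReal.toReal_rpow, ENNReal.toReal_ofReal (hApos j).le]
  have hIle : ∫ x : EuclideanSpace ℝ (Fin d), q x ^ (α:ℝ) * pm x ^ (1 - (α:ℝ))
      ≤ ∏ j, A j ^ (P j) := by
    rw [hIeq, ← hMtoReal]
    exact ENNReal.toReal_mono hMne hLM
  have hIpos : 0 < ∫ x : EuclideanSpace ℝ (Fin d), q x ^ (α:ℝ) * pm x ^ (1 - (α:ℝ)) := by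
    rw [hIeq]
    exact ENNReal.toReal_pos hLpos.ne' hLne
  -- log step
  have hlog : Real.log (∫ x : EuclideanSpace ℝ (Fin d),
      q x ^ (α:ℝ) * pm x ^ (1 - (α:ℝ))) ≤ ∑ j, P j * Real.log (A j) := by
    have h5 : Real.log (∏ j, A j ^ (P j)) = ∑ j, P j * Real.log (A j) := by
      rw [Real.log_prod fun j _ => (Real.rpow_pos_of_pos (hApos j) _).ne']
      exact Finset.sum_congr rfl fun j _ => Real.log_rpow (hApos j) _
    rw [← h5]
    exact Real.log_le_log hIpos hIle
  exact mul_le_mul_of_nonneg_left hlog hcoef
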